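/- Let N ≥ 1, Θ = (θ_1,…,θ_N) ∈ (0,∞)^N, and let X = (X_t)_{t∈ℤ^N} be a stationary random field. Then there exists a field G = (G_t)_{t∈ℤ^N} in the class 𝒢_Θ such that X_t = ⟨Θ̂, X̂⁻_t⟩ + Δ_t G for every t ∈ ℤ^N. -/

import Mathlib

open MeasureTheory Filter

noncomputable section

/-- Two families of real random variables indexed by `ℤ^N` have the same
finite-dimensional distributions. -/
def HasSameFDD {Ω : Type*} [MeasurableSpace Ω] {N : ℕ} (μ : Measure Ω)
    (X Y : (Fin N → ℤ) → Ω → ℝ) : Prop :=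
  ∀ (n : ℕ) (t : Fin n → (Fin N → ℤ)),
    μ.map (fun ω i => X (t i) ω) = μ.map (fun ω i => Y (t i) ω)

/-- A random field on `ℤ^N` is stationary if every shift leaves the
finite-dimensional distributions unchanged. -/
def IsStationaryField {Ω : Type*} [MeasurableSpace Ω] {N : ℕ} (μ : Measure Ω)
    (X : (Fin N → ℤ) → Ω → ℝ) : Prop :=
  ∀ s : Fin N → ℤ, HasSameFDD μ (fun t => X (t + s)) X

/-- A random field `Y` on `ℤ^N` is `Θ`-self-similar if `(Y_{t+s})_t` equals
`(e^{⟨s,Θ⟩} Y_t)_t` in finite-dimensional distributions for every `s`. -/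
def IsSelfSimilar {Ω : Type*} [MeasurableSpace Ω] {N : ℕ} (μ : Measure Ω)
    (Θ : Fin N → ℝ) (Y : (Fin N → ℤ) → Ω → ℝ) : Prop :=
  ∀ s : Fin N → ℤ, HasSameFDD μ (fun t => Y (t + s))
    (fun t ω => Real.exp (∑ l, (s l : ℝ) * Θ l) * Y t ω)

/-- The square increment `Δ_t X = Σ_{i ∈ {0,1}^N} (−1)^{Σ_l i_l} X_{t−i}`. -/
def sqInc {N : ℕ} (X : (Fin N → ℤ) → ℝ) (t : Fin N → ℤ) : ℝ :=
  ∑ i : Fin N → Bool,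
    (-1 : ℝ) ^ ((∑ l, if i l then 1 else 0 : ℕ)) *
      X (fun l => t l - if i l then 1 else 0)

/-- A field has stationary (rectangular) increments if its square-increment
field is stationary. -/
def HasStationaryIncrements {Ω : Type*} [MeasurableSpace Ω] {N : ℕ} (μ : Measure Ω)
    (G : (Fin N → ℤ) → Ω → ℝ) : Prop :=
  IsStationaryField μ (fun t ω => sqInc (fun u => G u ω) t)

/-- The inner product `⟨Θ̂, X̂⁻_t⟩ = Σ_{i ∈ {0,1}^N, i ≠ 0} (−1)^{1+Σ_l i_l}
e^{−⟨i,Θ⟩} X_{t−i}`. -/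
def prevInner {N : ℕ} (Θ : Fin N → ℝ) (X : (Fin N → ℤ) → ℝ) (t : Fin N → ℤ) : ℝ :=
  ∑ i ∈ Finset.univ.filter (fun i : Fin N → Bool => i ≠ fun _ => false),
    (-1 : ℝ) ^ ((1 + ∑ l, if i l then 1 else 0 : ℕ)) *
      (Real.exp (-∑ l, (if i l then (1 : ℝ) else 0) * Θ l) *
        X (fun l => t l - if i l then 1 else 0))

/-- Iterated limit in probability `lim_{M₁→∞} ⋯ lim_{M_k→∞} F(M₁,…,M_k) = Z`:
the innermost limit is over the last variable, the outermost over the first. -/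
def IterLimInProb {Ω : Type*} [MeasurableSpace Ω] (μ : Measure Ω) :
    (k : ℕ) → ((Fin k → ℕ) → Ω → ℝ) → (Ω → ℝ) → Prop
  | 0, F, Z => ∀ ω, F (fun i => i.elim0) ω = Z ω
  | k + 1, F, Z => ∃ H : ℕ → Ω → ℝ,
      (∀ M₁ : ℕ, IterLimInProb μ k (fun M => F (Fin.cons M₁ M)) (H M₁)) ∧
      TendstoInMeasure μ H atTop Z

/-- The class `𝒢_Θ`: stationary increment fields `G` vanishing on
`Σ_l t_l ∈ {0,−1,…,−N+1}` such that the iterated limit (in probability)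
`lim_{M₁→∞}⋯lim_{M_N→∞} Σ_{j₁=−M₁}^{t₁}⋯Σ_{j_N=−M_N}^{t_N} e^{⟨j,Θ⟩} Δ_j G`
exists as an (almost surely finite, real-valued) random variable for every `t`. -/
def MemClassG {Ω : Type*} [MeasurableSpace Ω] {N : ℕ} (μ : Measure Ω)
    (Θ : Fin N → ℝ) (G : (Fin N → ℤ) → Ω → ℝ) : Prop :=
  HasStationaryIncrements μ G ∧
  (∀ t : Fin N → ℤ, -(N : ℤ) + 1 ≤ ∑ l, t l → (∑ l, t l) ≤ 0 → ∀ ω, G t ω = 0) ∧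
  (∀ t : Fin N → ℤ, ∃ Z : Ω → ℝ,
    IterLimInProb μ N (fun M ω =>
      ∑ j ∈ Finset.Icc (fun l => -(M l : ℤ)) t,
        Real.exp (∑ l, (j l : ℝ) * Θ l) * sqInc (fun u => G u ω) j) Z)

/-- The iterated (chained) sum
`Σ_{k₁ = c − t₂ − … − t_N}^{t₁} Σ_{k₂ = c − k₁ − t₃ − … − t_N}^{t₂} ⋯
 Σ_{k_N = c − k₁ − … − k_{N−1}}^{t_N} f(k)`, with empty ranges contributing `0`. -/
def iterSumPos : (n : ℕ) → ℤ → (Fin n → ℤ) → ((Fin n → ℤ) → ℝ) → ℝ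
  | 0, _, _, f => f (fun i => i.elim0)
  | n + 1, c, t, f =>
      ∑ k ∈ Finset.Icc (c - ∑ l : Fin n, t l.succ) (t 0),
        iterSumPos n (c - k) (fun l => t l.succ) (fun j => f (Fin.cons k j))

/-- The iterated (chained) sum
`Σ_{k₁ = t₁+1}^{c − t₂ − … − t_N − N + 1} Σ_{k₂ = t₂+1}^{c − k₁ − t₃ − … − t_N − N + 2} ⋯
 Σ_{k_N = t_N+1}^{c − k₁ − … − k_{N−1}} f(k)`, with empty ranges contributing `0`. -/
def iterSumNeg : (n : ℕ) → ℤ → (Fin n → ℤ) → ((Fin n → ℤ) → ℝ) → ℝ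
  | 0, _, _, f => f (fun i => i.elim0)
  | n + 1, c, t, f =>
      ∑ k ∈ Finset.Icc (t 0 + 1) (c - (∑ l : Fin n, t l.succ) - (n : ℤ)),
        iterSumNeg n (c - k) (fun l => t l.succ) (fun j => f (Fin.cons k j))

/-- The field `G` built from a (deterministic realisation of a) field `Y`:
for `Σ_l t_l ≥ 1` it is the chained sum
`Σ_{k₁ = 1−t₂−…−t_N}^{t₁} ⋯ Σ_{k_N = 1−k₁−…−k_{N−1}}^{t_N} e^{−⟨k,Θ⟩} Δ_k Y`,
and for `Σ_l t_l ≤ 0` it is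
`(−1)^N Σ_{k₁ = t₁+1}^{−t₂−…−t_N−N+1} ⋯ Σ_{k_N = t_N+1}^{−k₁−…−k_{N−1}} e^{−⟨k,Θ⟩} Δ_k Y`. -/
def lampertiG {N : ℕ} (Θ : Fin N → ℝ) (Y : (Fin N → ℤ) → ℝ) (t : Fin N → ℤ) : ℝ :=
  if 1 ≤ ∑ l, t l then
    iterSumPos N 1 t (fun k => Real.exp (-∑ l, (k l : ℝ) * Θ l) * sqInc Y k)
  else
    (-1 : ℝ) ^ N *
      iterSumNeg N 0 t (fun k => Real.exp (-∑ l, (k l : ℝ) * Θ l) * sqInc Y k)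

/-!
Put `Y_u = e^{⟨u,Θ⟩} X_u` and `g_t = e^{-⟨t,Θ⟩} Δ_t Y`. Expanding `Δ_t Y` gives
`X_t = ⟨Θ̂, X̂⁻_t⟩ + g_t`, and `g` is a finite linear filter of `X`, hence stationary. For `G_u`
sum `g` over the lattice simplex `{k ≤ u, Σ k ≥ 1}` and, with sign `(-1)^N`, over
`{k > u, Σ k ≤ 0}`; inclusion–exclusion gives `Δ G = g`, and both simplices are empty on the band
`-N < Σ u ≤ 0`. Finally
`Σ_{j ∈ [-M, t]} e^{⟨j,Θ⟩} Δ_j G = Σ_{j ∈ [-M, t]} Δ_j Y` telescopes to `Y_t` plus corner terms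
that carry a factor `e^{-(M_l + 1) θ_l}`. A stationary field is bounded in probability, so these
corner terms vanish in probability, one limit at a time.
-/

open Finset
open scoped ENNReal Topology

section SquareIncrement

variable {N : ℕ}

lemma sqInc_congr {Y₁ Y₂ : (Fin N → ℤ) → ℝ} {t : Fin N → ℤ}
    (h : ∀ i : Fin N → Bool, Y₁ (fun l => t l - if i l then 1 else 0) =
      Y₂ (fun l => t l - if i l then 1 else 0)) :
    sqInc Y₁ t = sqInc Y₂ t := by
  simp only [sqInc, h]

lemma sqInc_add (Y₁ Y₂ : (Fin N → ℤ) → ℝ) (t : Fin N → ℤ) :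
    sqInc (fun u => Y₁ u + Y₂ u) t = sqInc Y₁ t + sqInc Y₂ t := by
  simp only [sqInc, mul_add, sum_add_distrib]

lemma sqInc_sub (Y₁ Y₂ : (Fin N → ℤ) → ℝ) (t : Fin N → ℤ) :
    sqInc (fun u => Y₁ u - Y₂ u) t = sqInc Y₁ t - sqInc Y₂ t := by
  simp only [sqInc, mul_sub, sum_sub_distrib]

lemma sqInc_const_mul (c : ℝ) (Y : (Fin N → ℤ) → ℝ) (t : Fin N → ℤ) :
    sqInc (fun u => c * Y u) t = c * sqInc Y t := by
  simp only [sqInc, mul_sum]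
  exact sum_congr rfl fun _ _ => by ring

lemma sqInc_sum {ι : Type*} (s : Finset ι) (Y : ι → (Fin N → ℤ) → ℝ) (t : Fin N → ℤ) :
    sqInc (fun u => ∑ a ∈ s, Y a u) t = ∑ a ∈ s, sqInc (Y a) t := by
  simp only [sqInc, mul_sum]
  exact sum_comm

lemma sqInc_prod (φ : Fin N → ℤ → ℝ) (t : Fin N → ℤ) :
    sqInc (fun u => ∏ l, φ l (u l)) t = ∏ l, (φ l (t l) - φ l (t l - 1)) := by
  have hφ : ∀ l, φ l (t l) - φ l (t l - 1) =
      ∑ b : Bool, (-1 : ℝ) ^ (if b then 1 else 0 : ℕ) * φ l (t l - if b then 1 else 0) := by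
    intro l; simp [sub_eq_add_neg, add_comm]
  simp only [hφ, Fintype.prod_sum, sqInc, ← prod_pow_eq_pow_sum, ← prod_mul_distrib]

lemma sqInc_indicator_le (k t : Fin N → ℤ) :
    sqInc (fun u => if ∀ l, k l ≤ u l then 1 else 0) t = if k = t then 1 else 0 := by
  have hprod : (fun u : Fin N → ℤ => if ∀ l, k l ≤ u l then (1 : ℝ) else 0) =
      fun u => ∏ l, if k l ≤ u l then 1 else 0 := by
    funext u; convert Fintype.prod_boole.symm
  calc _ = ∏ l, if k l = t l then (1 : ℝ) else 0 := by
        rw [hprod]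
        refine (sqInc_prod (fun l z => if k l ≤ z then 1 else 0) t).trans ?_
        refine prod_congr rfl fun l _ => ?_
        split_ifs <;> first | omega | norm_num
    _ = _ := by simp [Fintype.prod_boole, funext_iff]

lemma sqInc_indicator_lt (k t : Fin N → ℤ) :
    sqInc (fun u => if ∀ l, u l < k l then 1 else 0) t = (-1) ^ N * if k = t then 1 else 0 := by
  have hprod : (fun u : Fin N → ℤ => if ∀ l, u l < k l then (1 : ℝ) else 0) =
      fun u => ∏ l, if u l < k l then 1 else 0 := by
    funext u; convert Fintype.prod_boole.symm
  calc _ = ∏ l, -if k l = t l then (1 : ℝ) else 0 := by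
        rw [hprod]
        refine (sqInc_prod (fun l z => if z < k l then 1 else 0) t).trans ?_
        refine prod_congr rfl fun l _ => ?_
        split_ifs <;> first | omega | norm_num
    _ = _ := by simp [prod_neg, Fintype.prod_boole, funext_iff]

lemma sqInc_cons {k : ℕ} (Y : (Fin (k + 1) → ℤ) → ℝ) (j₀ : ℤ) (j : Fin k → ℤ) :
    sqInc Y (Fin.cons j₀ j) =
      sqInc (fun v => Y (Fin.cons j₀ v)) j - sqInc (fun v => Y (Fin.cons (j₀ - 1) v)) j := by
  have hcorner : ∀ (b : Bool) (i : Fin k → Bool),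
      (fun l => (Fin.cons j₀ j : Fin (k + 1) → ℤ) l -
          if Fin.consEquiv (fun _ => Bool) (b, i) l then 1 else 0) =
        Fin.cons (j₀ - if b then 1 else 0) (fun l => j l - if i l then 1 else 0) := by
    intro b i
    funext l
    induction l using Fin.cases <;> simp [Fin.consEquiv]
  have hcount : ∀ (b : Bool) (i : Fin k → Bool),
      (∑ l, if Fin.consEquiv (fun _ => Bool) (b, i) l then 1 else 0 : ℕ) =
        (if b then 1 else 0) + ∑ l, if i l then 1 else 0 := by
    intro b i
    simp [Fin.sum_univ_succ, Fin.consEquiv]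
  rw [sqInc, ← (Fin.consEquiv fun _ => Bool).sum_comp, Fintype.sum_prod_type, Fintype.sum_bool]
  simp only [hcorner, hcount, sqInc]
  simp [pow_add, sub_eq_add_neg, add_comm]

end SquareIncrement

section WeightedIncrement

variable {N : ℕ}

/-- `e^{-⟨k,Θ⟩} Δ_k (e^{⟨·,Θ⟩} Y)`, written out (see `sqInc_exp_mul`). -/
def weightedInc (Θ : Fin N → ℝ) (Y : (Fin N → ℤ) → ℝ) (k : Fin N → ℤ) : ℝ :=
  ∑ i : Fin N → Bool, (-1 : ℝ) ^ (∑ l, if i l then 1 else 0 : ℕ) *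
    (Real.exp (-∑ l, (if i l then (1 : ℝ) else 0) * Θ l) *
      Y (fun l => k l - if i l then 1 else 0))

lemma eq_prevInner_add_weightedInc (Θ : Fin N → ℝ) (Y : (Fin N → ℤ) → ℝ) (k : Fin N → ℤ) :
    Y k = prevInner Θ Y k + weightedInc Θ Y k := by
  rw [weightedInc,
    ← sum_filter_add_sum_filter_not univ (fun i : Fin N → Bool => i ≠ fun _ => false), prevInner, ← add_assoc, ← sum_add_distrib]
  simp [pow_add, filter_eq']

lemma sqInc_exp_mul (Θ : Fin N → ℝ) (Y : (Fin N → ℤ) → ℝ) (j : Fin N → ℤ) :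
    sqInc (fun u => Real.exp (∑ l, (u l : ℝ) * Θ l) * Y u) j =
      Real.exp (∑ l, (j l : ℝ) * Θ l) * weightedInc Θ Y j := by
  rw [sqInc, weightedInc, mul_sum]
  refine sum_congr rfl fun i _ => ?_
  have hexp : Real.exp (∑ l, ((j l - if i l then 1 else 0 : ℤ) : ℝ) * Θ l) =
      Real.exp (∑ l, (j l : ℝ) * Θ l) * Real.exp (-∑ l, (if i l then (1 : ℝ) else 0) * Θ l) := by
    rw [← Real.exp_add, ← sum_neg_distrib, ← sum_add_distrib]
    congr 1
    refine sum_congr rfl fun l _ => ?_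
    split_ifs <;> push_cast <;> ring
  rw [hexp]
  ring

end WeightedIncrement

section Antiderivative

variable {N : ℕ}

lemma sum_sub_apply_le {k u : Fin N → ℤ} (h : ∀ l, k l ≤ u l) (l : Fin N) :
    ∑ j, k j - k l ≤ ∑ j, u j - u l := by
  rw [← sum_erase_eq_sub (mem_univ l), ← sum_erase_eq_sub (mem_univ l)]
  exact sum_le_sum fun j _ => h j

def lowerSimplex (u : Fin N → ℤ) : Finset (Fin N → ℤ) :=
  (Icc (fun l => u l + 1 - ∑ j, u j) u).filter fun k => 1 ≤ ∑ l, k l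

def upperSimplex (u : Fin N → ℤ) : Finset (Fin N → ℤ) :=
  (Icc (fun l => u l + 1) (fun l => u l + 1 - ∑ j, u j - N)).filter fun k => ∑ l, k l ≤ 0

lemma mem_lowerSimplex {u k : Fin N → ℤ} :
    k ∈ lowerSimplex u ↔ (∀ l, k l ≤ u l) ∧ 1 ≤ ∑ l, k l := by
  simp only [lowerSimplex, mem_filter, mem_Icc, Pi.le_def]
  refine ⟨fun h => ⟨h.1.2, h.2⟩, fun h => ⟨⟨fun l => ?_, h.1⟩, h.2⟩⟩
  have := sum_sub_apply_le h.1 l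
  omega

lemma mem_upperSimplex {u k : Fin N → ℤ} :
    k ∈ upperSimplex u ↔ (∀ l, u l < k l) ∧ ∑ l, k l ≤ 0 := by
  simp only [upperSimplex, mem_filter, mem_Icc, Pi.le_def, Int.add_one_le_iff]
  refine ⟨fun h => ⟨h.1.1, h.2⟩, fun h => ⟨⟨h.1, fun l => ?_⟩, h.2⟩⟩
  have := sum_sub_apply_le (fun j => h.1 j) l
  simp only [sum_add_distrib, sum_const, card_univ, Fintype.card_fin, nsmul_eq_mul,
    mul_one] at this
  omega

def sqAntideriv (g : (Fin N → ℤ) → ℝ) (u : Fin N → ℤ) : ℝ :=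
  ∑ k ∈ lowerSimplex u, g k + (-1) ^ N * ∑ k ∈ upperSimplex u, g k

lemma sqAntideriv_eq_zero (g : (Fin N → ℤ) → ℝ) {u : Fin N → ℤ}
    (h₁ : -(N : ℤ) + 1 ≤ ∑ l, u l) (h₂ : ∑ l, u l ≤ 0) : sqAntideriv g u = 0 := by
  have hlower : lowerSimplex u = ∅ := eq_empty_of_forall_notMem fun k hk => by
    have := sum_le_sum fun l (_ : l ∈ univ) => (mem_lowerSimplex.1 hk).1 l
    have := (mem_lowerSimplex.1 hk).2
    omega
  have hupper : upperSimplex u = ∅ := eq_empty_of_forall_notMem fun k hk => by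
    have := sum_le_sum fun l (_ : l ∈ univ) => Int.add_one_le_of_lt ((mem_upperSimplex.1 hk).1 l)
    have := (mem_upperSimplex.1 hk).2
    simp only [sum_add_distrib, sum_const, card_univ, Fintype.card_fin, nsmul_eq_mul,
      mul_one] at *
    omega
  simp [sqAntideriv, hlower, hupper]

def sqAntiderivKernel (g : (Fin N → ℤ) → ℝ) (k u : Fin N → ℤ) : ℝ :=
  (if 1 ≤ ∑ l, k l then g k else 0) * (if ∀ l, k l ≤ u l then 1 else 0) +
    (-1) ^ N * ((if ∑ l, k l ≤ 0 then g k else 0) * (if ∀ l, u l < k l then 1 else 0))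

lemma sqAntideriv_eq_sum_kernel (g : (Fin N → ℤ) → ℝ) {u : Fin N → ℤ} {B : Finset (Fin N → ℤ)}
    (hlower : lowerSimplex u ⊆ B) (hupper : upperSimplex u ⊆ B) :
    sqAntideriv g u = ∑ k ∈ B, sqAntiderivKernel g k u := by
  classical
  rw [sqAntideriv, ← inter_eq_right.2 hlower, ← inter_eq_right.2 hupper, ← sum_ite_mem,
    ← sum_ite_mem, mul_sum, ← sum_add_distrib]
  refine sum_congr rfl fun k _ => ?_
  simp only [sqAntiderivKernel, mem_lowerSimplex, mem_upperSimplex]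
  split_ifs <;> simp_all

lemma sqInc_sqAntiderivKernel (g : (Fin N → ℤ) → ℝ) (k t : Fin N → ℤ) :
    sqInc (sqAntiderivKernel g k) t = if k = t then g k else 0 := by
  unfold sqAntiderivKernel
  rw [sqInc_add, sqInc_const_mul, sqInc_const_mul, sqInc_const_mul, sqInc_indicator_le,
    sqInc_indicator_lt]
  by_cases hk : k = t
  · subst hk
    by_cases h : 1 ≤ ∑ l, k l
    · simp [h, show ¬ ∑ l, k l ≤ 0 by omega]
    · simp only [h, show ∑ l, k l ≤ 0 by omega, if_true, if_false]
      linear_combination g k * (mul_pow (-1 : ℝ) (-1) N).symm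
  · simp [hk]

lemma sqInc_sqAntideriv (g : (Fin N → ℤ) → ℝ) (t : Fin N → ℤ) :
    sqInc (sqAntideriv g) t = g t := by
  set B := lowerSimplex t ∪ upperSimplex (fun l => t l - 1)
  have hcell : ∀ i : Fin N → Bool, sqAntideriv g (fun l => t l - if i l then 1 else 0) =
      ∑ k ∈ B, sqAntiderivKernel g k (fun l => t l - if i l then 1 else 0) := by
    intro i
    refine sqAntideriv_eq_sum_kernel g (fun k hk => ?_) (fun k hk => ?_)
    · refine mem_union_left _ (mem_lowerSimplex.2 ⟨fun l => ?_, (mem_lowerSimplex.1 hk).2⟩)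
      have := (mem_lowerSimplex.1 hk).1 l
      split_ifs at this <;> omega
    · refine mem_union_right _ (mem_upperSimplex.2 ⟨fun l => ?_, (mem_upperSimplex.1 hk).2⟩)
      have := (mem_upperSimplex.1 hk).1 l
      split_ifs at this <;> omega
  have ht : t ∈ B := by
    by_cases h : 1 ≤ ∑ l, t l
    · exact mem_union_left _ (mem_lowerSimplex.2 ⟨fun l => le_rfl, h⟩)
    · exact mem_union_right _ (mem_upperSimplex.2 ⟨fun l => by omega, by omega⟩)
  rw [sqInc_congr (Y₂ := fun u => ∑ k ∈ B, sqAntiderivKernel g k u) hcell, sqInc_sum]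
  simp only [sqInc_sqAntiderivKernel]
  rw [sum_ite_eq' B t g, if_pos ht]

end Antiderivative

section Stationarity

variable {Ω : Type*} [MeasurableSpace Ω] {μ : Measure Ω} {N : ℕ}

lemma HasSameFDD.map_eq {X Y : (Fin N → ℤ) → Ω → ℝ} (h : HasSameFDD μ X Y)
    (hX : ∀ t, Measurable (X t)) (hY : ∀ t, Measurable (Y t))
    {ι : Type*} [Fintype ι] (t : ι → Fin N → ℤ) :
    μ.map (fun ω i => X (t i) ω) = μ.map (fun ω i => Y (t i) ω) := by
  let e := Fintype.equivFin ι
  have hreindex : Measurable fun (v : Fin (Fintype.card ι) → ℝ) (i : ι) => v (e i) := by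
    fun_prop
  have hfactor : ∀ Z : (Fin N → ℤ) → Ω → ℝ, (fun ω i => Z (t i) ω) =
      (fun v i => v (e i)) ∘ fun ω a => Z (t (e.symm a)) ω := by
    intro Z; funext ω i; simp
  rw [hfactor X, hfactor Y, ← Measure.map_map hreindex (by fun_prop),
    ← Measure.map_map hreindex (by fun_prop), h]

lemma IsStationaryField.linearFilter {X : (Fin N → ℤ) → Ω → ℝ} (hX : IsStationaryField μ X)
    (hmeas : ∀ t, Measurable (X t)) {ι : Type*} [Fintype ι] (c : ι → ℝ) (d : ι → Fin N → ℤ) :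
    IsStationaryField μ (fun t ω => ∑ a, c a * X (t - d a) ω) := by
  intro s n t
  let Ψ : (Fin n × ι → ℝ) → Fin n → ℝ := fun v j => ∑ a, c a * v (j, a)
  have hΨ : Measurable Ψ := by fun_prop
  have hfactor : ∀ s' : Fin N → ℤ, (fun ω j => ∑ a, c a * X (t j + s' - d a) ω) =
      Ψ ∘ fun ω (p : Fin n × ι) => X (t p.1 - d p.2 + s') ω := by
    intro s'; funext ω j; simp [Ψ, sub_add_eq_add_sub]
  have h := (hX s).map_eq (fun u => hmeas _) hmeas fun p : Fin n × ι => t p.1 - d p.2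
  have hfactor₀ := hfactor 0
  simp only [add_zero] at hfactor₀
  change μ.map (fun ω j => ∑ a, c a * X (t j + s - d a) ω) = _
  rw [hfactor s, hfactor₀, ← Measure.map_map hΨ (by fun_prop),
    ← Measure.map_map hΨ (by fun_prop), h]

lemma IsStationaryField.map_eq {X : (Fin N → ℤ) → Ω → ℝ} (hX : IsStationaryField μ X)
    (hmeas : ∀ t, Measurable (X t)) (u : Fin N → ℤ) : μ.map (X u) = μ.map (X 0) := by
  have h := (hX u).map_eq (fun _ => hmeas _) hmeas fun _ : Unit => 0
  have heval : Measurable fun v : Unit → ℝ => v () := measurable_pi_apply _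
  have := congrArg (Measure.map fun v : Unit → ℝ => v ()) h
  rwa [Measure.map_map heval (by fun_prop), Measure.map_map heval (by fun_prop), zero_add] at this

lemma IsStationaryField.weightedInc
    {X : (Fin N → ℤ) → Ω → ℝ} (hX : IsStationaryField μ X) (hmeas : ∀ t, Measurable (X t))
    (Θ : Fin N → ℝ) : IsStationaryField μ fun t ω => weightedInc Θ (fun u => X u ω) t := by
  convert hX.linearFilter hmeas
    (fun i : Fin N → Bool => (-1 : ℝ) ^ (∑ l, if i l then 1 else 0 : ℕ) *
      Real.exp (-∑ l, (if i l then (1 : ℝ) else 0) * Θ l))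
    (fun i l => if i l then (1 : ℤ) else 0) using 3 with t ω
  simp only [_root_.weightedInc, mul_assoc]
  rfl

end Stationarity

section BoundedInProbability

variable {Ω : Type*} [MeasurableSpace Ω] {μ : Measure Ω} {ι κ : Type*}

def BoundedInProbability (μ : Measure Ω) (X : ι → Ω → ℝ) : Prop :=
  ∀ ε : ℝ≥0∞, 0 < ε → ∃ R : ℝ, ∀ i, μ {ω | R < |X i ω|} ≤ ε

namespace BoundedInProbability

variable {X Y : ι → Ω → ℝ}

lemma exists_pos (hX : BoundedInProbability μ X) {ε : ℝ≥0∞} (hε : 0 < ε) :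
    ∃ R > 0, ∀ i, μ {ω | R < |X i ω|} ≤ ε := by
  obtain ⟨R, hR⟩ := hX ε hε
  refine ⟨max R 1, by positivity, fun i => (measure_mono fun ω hω => ?_).trans (hR i)⟩
  exact (le_max_left R 1).trans_lt hω

lemma comp (hX : BoundedInProbability μ X) (f : κ → ι) :
    BoundedInProbability μ fun k => X (f k) :=
  fun ε hε => (hX ε hε).imp fun _ hR k => hR (f k)

lemma const_mul (hX : BoundedInProbability μ X) (c : ℝ) :
    BoundedInProbability μ fun i ω => c * X i ω := by
  intro ε hε
  obtain ⟨R, hR, hbound⟩ := hX.exists_pos hε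
  refine ⟨(|c| + 1) * R, fun i => (measure_mono fun ω hω => ?_).trans (hbound i)⟩
  simp only [Set.mem_ofPred_eq, abs_mul] at hω ⊢
  by_contra! h
  nlinarith [abs_nonneg c, abs_nonneg (X i ω)]

lemma add (hX : BoundedInProbability μ X) (hY : BoundedInProbability μ Y) :
    BoundedInProbability μ fun i ω => X i ω + Y i ω := by
  intro ε hε
  obtain ⟨R₁, hR₁⟩ := hX (ε / 2) (ENNReal.half_pos hε.ne')
  obtain ⟨R₂, hR₂⟩ := hY (ε / 2) (ENNReal.half_pos hε.ne')
  refine ⟨R₁ + R₂, fun i => ?_⟩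
  calc μ {ω | R₁ + R₂ < |X i ω + Y i ω|}
      ≤ μ ({ω | R₁ < |X i ω|} ∪ {ω | R₂ < |Y i ω|}) := measure_mono fun ω hω => by
        simp only [Set.mem_ofPred_eq, Set.mem_union] at hω ⊢
        by_contra! h
        linarith [abs_add_le (X i ω) (Y i ω)]
    _ ≤ ε / 2 + ε / 2 := (measure_union_le _ _).trans (add_le_add (hR₁ i) (hR₂ i))
    _ = ε := ENNReal.add_halves ε

lemma tendstoInMeasure_add_mul (hX : BoundedInProbability μ X) {l : Filter κ} {r : κ → ℝ}
    (hr : Tendsto r l (𝓝 0)) (u : κ → ι) (Z : Ω → ℝ) :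
    TendstoInMeasure μ (fun k ω => Z ω + r k * X (u k) ω) l Z := by
  rw [tendstoInMeasure_iff_dist]
  intro δ hδ
  rw [ENNReal.tendsto_nhds_zero]
  intro ε hε
  obtain ⟨R, hR, hbound⟩ := hX.exists_pos hε
  have hsmall : ∀ᶠ k in l, |r k| * R < δ := by
    have : Tendsto (fun k => |r k| * R) l (𝓝 0) := by simpa using hr.abs.mul_const R
    exact this.eventually (gt_mem_nhds hδ)
  filter_upwards [hsmall] with k hk
  refine (measure_mono fun ω hω => ?_).trans (hbound (u k))
  simp only [Set.mem_ofPred_eq, Real.dist_eq, add_sub_cancel_left, abs_mul] at hω ⊢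
  by_contra! h
  nlinarith [abs_nonneg (r k)]

end BoundedInProbability

lemma IsStationaryField.boundedInProbability [IsFiniteMeasure μ] {N : ℕ}
    {X : (Fin N → ℤ) → Ω → ℝ} (hX : IsStationaryField μ X) (hmeas : ∀ t, Measurable (X t)) :
    BoundedInProbability μ X := by
  intro ε hε
  have htail := tendsto_measure_norm_gt_of_isTightMeasureSet
    (isTightMeasureSet_singleton (μ := μ.map (X 0)))
  simp only [Set.mem_singleton_iff, iSup_iSup_eq_left, Real.norm_eq_abs] at htail
  obtain ⟨R, hR⟩ := (ENNReal.tendsto_atTop_zero.1 htail) ε hε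
  refine ⟨R, fun u => ?_⟩
  have hset : MeasurableSet {x : ℝ | R < |x|} := measurableSet_lt measurable_const measurable_abs
  rw [← Set.preimage_ofPred_eq (p := fun x => R < |x|), ← Measure.map_apply (hmeas u) hset,
    hX.map_eq hmeas u]
  exact hR R le_rfl

end BoundedInProbability

lemma sum_Icc_fin_succ {M : Type*} [AddCommMonoid M] {k : ℕ} (a b : Fin (k + 1) → ℤ)
    (f : (Fin (k + 1) → ℤ) → M) :
    ∑ j ∈ Icc a b, f j =
      ∑ j₀ ∈ Icc (a 0) (b 0), ∑ j ∈ Icc (Fin.tail a) (Fin.tail b), f (Fin.cons j₀ j) := by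
  rw [← sum_product']
  refine sum_nbij' (fun j => (j 0, Fin.tail j)) (fun p => Fin.cons p.1 p.2) ?_ ?_ ?_ ?_ ?_ <;>
    simp [Pi.le_def, Fin.forall_fin_succ, Fin.tail] <;> tauto

lemma sum_Icc_sub_pred {M : Type*} [AddCommGroup M] (f : ℤ → M) {a b : ℤ} (h : a ≤ b + 1) :
    ∑ j ∈ Icc a b, (f j - f (j - 1)) = f b - f (a - 1) := by
  induction b, (show a - 1 ≤ b by omega) using Int.leInduction with
  | base => simp
  | succ b hb ih =>
    rw [← insert_Icc_right_eq_Icc_add_one (by omega), sum_insert (by simp), ih (by omega)]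
    simp

lemma sum_Icc_sqInc_succ {k : ℕ} (Y : (Fin (k + 1) → ℤ) → ℝ) {a b : Fin (k + 1) → ℤ}
    (h : a 0 ≤ b 0 + 1) :
    ∑ j ∈ Icc a b, sqInc Y j = ∑ j ∈ Icc (Fin.tail a) (Fin.tail b),
      sqInc (fun v => Y (Fin.cons (b 0) v) - Y (Fin.cons (a 0 - 1) v)) j := by
  rw [sum_Icc_fin_succ, sum_comm]
  refine sum_congr rfl fun j _ => ?_
  simp only [sqInc_cons]
  rw [sum_Icc_sub_pred (fun z => sqInc (fun v => Y (Fin.cons z v)) j) h, sqInc_sub]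

lemma sum_cons_mul {k : ℕ} (z : ℤ) (v : Fin k → ℤ) (Θ : Fin (k + 1) → ℝ) :
    ∑ l, ((Fin.cons z v : Fin (k + 1) → ℤ) l : ℝ) * Θ l = z * Θ 0 + ∑ l, (v l : ℝ) * Θ l.succ := by
  simp [Fin.sum_univ_succ]

lemma sum_Icc_sqInc_exp_mul_succ {k : ℕ} (Y : (Fin (k + 1) → ℤ) → ℝ) (Θ : Fin (k + 1) → ℝ)
    {a b : Fin (k + 1) → ℤ} (h : a 0 ≤ b 0 + 1) :
    ∑ j ∈ Icc a b, sqInc (fun u => Real.exp (∑ l, (u l : ℝ) * Θ l) * Y u) j =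
      ∑ j ∈ Icc (Fin.tail a) (Fin.tail b), sqInc (fun v => Real.exp (∑ l, (v l : ℝ) * Θ l.succ) *
        (Real.exp (b 0 * Θ 0) * Y (Fin.cons (b 0) v) +
          -Real.exp (((a 0 - 1 : ℤ) : ℝ) * Θ 0) * Y (Fin.cons (a 0 - 1) v))) j := by
  rw [sum_Icc_sqInc_succ _ h]
  refine sum_congr rfl fun j _ => congrArg (sqInc · j) (funext fun v => ?_)
  simp only [sum_cons_mul, Real.exp_add]
  ring

lemma tendsto_exp_neg_natCast_mul {θ : ℝ} (hθ : 0 < θ) :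
    Tendsto (fun M : ℕ => Real.exp (((-(M : ℤ) - 1 : ℤ) : ℝ) * θ)) atTop (𝓝 0) := by
  push_cast
  refine Real.tendsto_exp_atBot.comp (Tendsto.atBot_mul_const hθ ?_)
  exact tendsto_atBot_add_const_right _ _ (tendsto_neg_atTop_atBot.comp tendsto_natCast_atTop_atTop)

section IteratedLimits

variable {Ω : Type*} [MeasurableSpace Ω] {μ : Measure Ω}

lemma tendstoInMeasure_const (Z : Ω → ℝ) : TendstoInMeasure μ (fun _ : ℕ => Z) atTop Z :=
  fun ε hε => by simp [not_le.2 hε]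

lemma iterLimInProb_const : ∀ (k : ℕ) (Z : Ω → ℝ), IterLimInProb μ k (fun _ => Z) Z
  | 0, _ => fun _ => rfl
  | k + 1, Z => ⟨fun _ => Z, fun _ => iterLimInProb_const k Z, tendstoInMeasure_const Z⟩

theorem iterLimInProb_sum_Icc_sqInc_exp_mul : ∀ {k : ℕ} {X : (Fin k → ℤ) → Ω → ℝ}
    {Θ : Fin k → ℝ}, BoundedInProbability μ X → (∀ l, 0 < Θ l) → ∀ t : Fin k → ℤ,
    IterLimInProb μ k
      (fun M ω => ∑ j ∈ Icc (fun l => -(M l : ℤ)) t,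
        sqInc (fun u => Real.exp (∑ l, (u l : ℝ) * Θ l) * X u ω) j)
      (fun ω => Real.exp (∑ l, (t l : ℝ) * Θ l) * X t ω)
  | 0, X, Θ, _, _, t => fun ω => by
    simp [Subsingleton.elim _ t, sqInc]
  | k + 1, X, Θ, hX, hΘ, t => by
    -- summing out the first coordinate telescopes it, leaving the rectangle sums of `X' M₁`
    let X' : ℕ → (Fin k → ℤ) → Ω → ℝ := fun M₁ v ω =>
      Real.exp (t 0 * Θ 0) * X (Fin.cons (t 0) v) ω +
        -Real.exp (((-(M₁ : ℤ) - 1 : ℤ) : ℝ) * Θ 0) * X (Fin.cons (-(M₁ : ℤ) - 1) v) ω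
    have hX' : ∀ M₁, BoundedInProbability μ (X' M₁) := fun M₁ =>
      ((hX.comp _).const_mul _).add ((hX.comp _).const_mul _)
    let H : ℕ → Ω → ℝ := fun M₁ => if -(M₁ : ℤ) ≤ t 0 then
      fun ω => Real.exp (∑ l, (Fin.tail t l : ℝ) * Θ l.succ) * X' M₁ (Fin.tail t) ω else 0
    refine ⟨H, fun M₁ => ?_, ?_⟩
    · by_cases hM₁ : -(M₁ : ℤ) ≤ t 0
      · convert iterLimInProb_sum_Icc_sqInc_exp_mul (hX' M₁) (fun l => hΘ l.succ) (Fin.tail t)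
          using 1
        · funext M ω
          exact sum_Icc_sqInc_exp_mul_succ (fun u => X u ω) Θ (by simp; omega)
        · simp [H, hM₁]
      · have hempty : ∀ M : Fin k → ℕ,
            Icc (fun l => -((Fin.cons M₁ M : Fin (k + 1) → ℕ) l : ℤ)) t = ∅ :=
          fun M => Icc_eq_empty fun h => hM₁ (by simpa using h 0)
        simp only [hempty, sum_empty, H, if_neg hM₁]
        exact iterLimInProb_const k 0
    · have hr := (tendsto_exp_neg_natCast_mul (hΘ 0)).const_mul
        (-Real.exp (∑ l, (Fin.tail t l : ℝ) * Θ l.succ))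
      rw [mul_zero] at hr
      refine (hX.tendstoInMeasure_add_mul hr (fun M₁ => Fin.cons (-(M₁ : ℤ) - 1) (Fin.tail t))
        _).congr' ?_ EventuallyEq.rfl
      filter_upwards [eventually_ge_atTop (-t 0).toNat] with M₁ hM₁
      refine Eventually.of_forall fun ω => ?_
      simp only [H, X', show -(M₁ : ℤ) ≤ t 0 by omega, if_true, Fin.sum_univ_succ (n := k),
        Real.exp_add, Fin.cons_self_tail, Fin.tail]
      ring

end IteratedLimits

theorem representation_of_stationary_general {Ω : Type*} [MeasurableSpace Ω]
    (μ : Measure Ω) [IsProbabilityMeasure μ] {N : ℕ}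
    (Θ : Fin N → ℝ) (hΘ : ∀ l, 0 < Θ l)
    (X : (Fin N → ℤ) → Ω → ℝ) (hmeas : ∀ t, Measurable (X t))
    (hX : IsStationaryField μ X) :
    ∃ G : (Fin N → ℤ) → Ω → ℝ, MemClassG μ Θ G ∧
      ∀ t ω, X t ω = prevInner Θ (fun u => X u ω) t + sqInc (fun u => G u ω) t := by
  let G : (Fin N → ℤ) → Ω → ℝ := fun t ω => sqAntideriv (weightedInc Θ fun u => X u ω) t
  have hΔG : ∀ ω, sqInc (fun u => G u ω) = weightedInc Θ fun u => X u ω :=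
    fun ω => funext (sqInc_sqAntideriv _)
  refine ⟨G, ⟨?_, fun t h₁ h₂ ω => sqAntideriv_eq_zero _ h₁ h₂, fun t =>
    ⟨fun ω => Real.exp (∑ l, (t l : ℝ) * Θ l) * X t ω, ?_⟩⟩, fun t ω => ?_⟩
  · simpa only [HasStationaryIncrements, hΔG] using hX.weightedInc hmeas Θ
  · simpa only [hΔG, sqInc_exp_mul] using
      iterLimInProb_sum_Icc_sqInc_exp_mul (hX.boundedInProbability hmeas) hΘ t
  · rw [hΔG]
    exact eq_prevInner_add_weightedInc Θ (fun u => X u ω) t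

/-- Theorem gchar2: every stationary random field `X` on `ℤ^N`
admits a representation `X_t = ⟨Θ̂, X̂⁻_t⟩ + Δ_t G` with some `G ∈ 𝒢_Θ`. -/
theorem representation_of_stationary {Ω : Type*} [MeasurableSpace Ω]
    (μ : Measure Ω) [IsProbabilityMeasure μ] {N : ℕ} (hN : 1 ≤ N)
    (Θ : Fin N → ℝ) (hΘ : ∀ l, 0 < Θ l)
    (X : (Fin N → ℤ) → Ω → ℝ) (hmeas : ∀ t, Measurable (X t))
    (hX : IsStationaryField μ X) :
    ∃ G : (Fin N → ℤ) → Ω → ℝ, MemClassG μ Θ G ∧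
      ∀ t ω, X t ω = prevInner Θ (fun u => X u ω) t + sqInc (fun u => G u ω) t :=
  representation_of_stationary_general μ Θ hΘ X hmeas hX
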